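/- Let p ≥ 2 and define g_p : ℝ^d → ℝ^d by g_p(0) = 0 and g_p(z) = p^{−1/(p−1)} ‖z‖^{−(p−2)/(p−1)} z for z ≠ 0. Then g_p is (1/(p−1))-Hölder continuous with constant 3 p^{−1/(p−1)}: for all x, y ∈ ℝ^d, ‖g_p(y) − g_p(x)‖ ≤ (3/p^{1/(p−1)}) ‖y − x‖^{1/(p−1)}. -/

import Mathlib

/-!
Up to the factor `p^(-α)`, `g_p` is the map `f z = ‖z‖^(α - 1) • z` with `α = 1/(p-1) ∈ (0, 1]`,
which is `α`-Hölder with constant `2` in any real normed space. Assume `‖x‖ ≤ ‖y‖` and put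
`t = ‖y - x‖`. If `‖y‖ ≤ t`, then `‖f y - f x‖ ≤ ‖y‖^α + ‖x‖^α ≤ 2 t^α`. Otherwise split
`f y - f x = ‖y‖^(α-1) • (y - x) + (‖y‖^(α-1) - ‖x‖^(α-1)) • x`: the first term has norm
`‖y‖^(α-1) t`, and by monotonicity of `s ↦ s^α` the second has norm at most
`‖y‖^(α-1) (‖y‖ - ‖x‖) ≤ ‖y‖^(α-1) t`; finally `‖y‖^(α-1) t ≤ t^α` because `t < ‖y‖` and `α ≤ 1`.
-/

open scoped Classical

/-- The inverse of the gradient of `z ↦ ‖z‖^p`. -/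
noncomputable def gp {d : ℕ} (p : ℝ) (z : EuclideanSpace ℝ (Fin d)) :
    EuclideanSpace ℝ (Fin d) :=
  if z = 0 then 0 else (p ^ (-(1 / (p - 1))) * ‖z‖ ^ (-((p - 2) / (p - 1)))) • z

open Real

namespace Real

variable {α a b t : ℝ}

lemma rpow_sub_one_mul_self (ha : 0 ≤ a) (hα : α ≠ 0) : a ^ (α - 1) * a = a ^ α := by
  rw [← rpow_add_one' ha (by simpa using hα), sub_add_cancel]

lemma rpow_sub_one_mul_le_rpow (hα : α ≤ 1) (ht : 0 ≤ t) (htb : t ≤ b) :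
    b ^ (α - 1) * t ≤ t ^ α := by
  rcases ht.eq_or_lt with rfl | ht
  · simp only [mul_zero]
    exact rpow_nonneg le_rfl α
  · calc b ^ (α - 1) * t ≤ t ^ (α - 1) * t :=
          mul_le_mul_of_nonneg_right (rpow_le_rpow_of_nonpos ht htb (by linarith)) ht.le
      _ = t ^ α := by rw [rpow_sub_one ht.ne', div_mul_cancel₀ _ ht.ne']

lemma abs_rpow_sub_one_sub_mul_le (hα₀ : 0 < α) (hα₁ : α ≤ 1) (ha : 0 ≤ a) (hab : a ≤ b) :
    |b ^ (α - 1) - a ^ (α - 1)| * a ≤ b ^ (α - 1) * (b - a) := by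
  rcases ha.eq_or_lt with rfl | ha
  · simp only [mul_zero, sub_zero]
    exact mul_nonneg (rpow_nonneg hab _) hab
  have hb : 0 ≤ b := ha.le.trans hab
  have hmono : b ^ (α - 1) ≤ a ^ (α - 1) := rpow_le_rpow_of_nonpos ha hab (by linarith)
  calc |b ^ (α - 1) - a ^ (α - 1)| * a = a ^ α - b ^ (α - 1) * a := by
        rw [abs_of_nonpos (sub_nonpos.2 hmono), neg_sub, sub_mul,
          rpow_sub_one_mul_self ha.le hα₀.ne']
    _ ≤ b ^ α - b ^ (α - 1) * a := by gcongr
    _ = b ^ (α - 1) * (b - a) := by rw [mul_sub, rpow_sub_one_mul_self hb hα₀.ne']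

end Real

section RpowSmul

variable {E : Type*} [NormedAddCommGroup E] [NormedSpace ℝ E] {α : ℝ}

lemma norm_rpow_smul_self (hα : α ≠ 0) (z : E) : ‖‖z‖ ^ (α - 1) • z‖ = ‖z‖ ^ α := by
  rw [norm_smul, norm_of_nonneg (rpow_nonneg (norm_nonneg z) _),
    rpow_sub_one_mul_self (norm_nonneg z) hα]

lemma norm_rpow_smul_sub_le_of_norm_le (hα₀ : 0 < α) (hα₁ : α ≤ 1) {x y : E}
    (hxy : ‖x‖ ≤ ‖y‖) :
    ‖‖y‖ ^ (α - 1) • y - ‖x‖ ^ (α - 1) • x‖ ≤ 2 * ‖y - x‖ ^ α := by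
  rcases le_or_gt ‖y‖ ‖y - x‖ with hyt | hty
  · calc ‖‖y‖ ^ (α - 1) • y - ‖x‖ ^ (α - 1) • x‖
          ≤ ‖‖y‖ ^ (α - 1) • y‖ + ‖‖x‖ ^ (α - 1) • x‖ := norm_sub_le _ _
      _ = ‖y‖ ^ α + ‖x‖ ^ α := by rw [norm_rpow_smul_self hα₀.ne', norm_rpow_smul_self hα₀.ne']
      _ ≤ ‖y - x‖ ^ α + ‖y - x‖ ^ α := by gcongr; exact hxy.trans hyt
      _ = 2 * ‖y - x‖ ^ α := by ring
  have hsplit : ‖y‖ ^ (α - 1) • y - ‖x‖ ^ (α - 1) • x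
      = ‖y‖ ^ (α - 1) • (y - x) + (‖y‖ ^ (α - 1) - ‖x‖ ^ (α - 1)) • x := by
    module
  have hmain : ‖y‖ ^ (α - 1) * ‖y - x‖ ≤ ‖y - x‖ ^ α :=
    rpow_sub_one_mul_le_rpow hα₁ (norm_nonneg _) hty.le
  calc ‖‖y‖ ^ (α - 1) • y - ‖x‖ ^ (α - 1) • x‖
        ≤ ‖y‖ ^ (α - 1) * ‖y - x‖ + |‖y‖ ^ (α - 1) - ‖x‖ ^ (α - 1)| * ‖x‖ := by
          rw [hsplit]
          refine (norm_add_le _ _).trans_eq ?_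
          rw [norm_smul, norm_smul, norm_of_nonneg (rpow_nonneg (norm_nonneg y) _),
            Real.norm_eq_abs]
    _ ≤ ‖y‖ ^ (α - 1) * ‖y - x‖ + ‖y‖ ^ (α - 1) * (‖y‖ - ‖x‖) := by
          grw [abs_rpow_sub_one_sub_mul_le hα₀ hα₁ (norm_nonneg x) hxy]
    _ ≤ ‖y‖ ^ (α - 1) * ‖y - x‖ + ‖y‖ ^ (α - 1) * ‖y - x‖ := by
          gcongr
          exact norm_sub_norm_le y x
    _ ≤ 2 * ‖y - x‖ ^ α := by linarith

lemma norm_rpow_smul_sub_le (hα₀ : 0 < α) (hα₁ : α ≤ 1) (x y : E) :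
    ‖‖y‖ ^ (α - 1) • y - ‖x‖ ^ (α - 1) • x‖ ≤ 2 * ‖y - x‖ ^ α := by
  rcases le_total ‖x‖ ‖y‖ with h | h
  · exact norm_rpow_smul_sub_le_of_norm_le hα₀ hα₁ h
  · rw [norm_sub_rev, norm_sub_rev y]
    exact norm_rpow_smul_sub_le_of_norm_le hα₀ hα₁ h

end RpowSmul

lemma gp_eq_smul {d : ℕ} {p : ℝ} (hp : p ≠ 1) (z : EuclideanSpace ℝ (Fin d)) :
    gp p z = p ^ (-(1 / (p - 1))) • (‖z‖ ^ (1 / (p - 1) - 1) • z) := by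
  have hexp : -((p - 2) / (p - 1)) = 1 / (p - 1) - 1 := by
    field_simp [sub_ne_zero.2 hp]
    ring
  by_cases hz : z = 0
  · simp [gp, hz]
  · rw [gp, if_neg hz, hexp, smul_smul]

/-- `g_p` is `(1/(p-1))`-Hölder continuous with constant `3 p^(-1/(p-1))`. -/
theorem gp_holder (d : ℕ) (p : ℝ) (hp : 2 ≤ p) (x y : EuclideanSpace ℝ (Fin d)) :
    ‖gp p y - gp p x‖ ≤ 3 / p ^ (1 / (p - 1)) * ‖y - x‖ ^ (1 / (p - 1)) := by
  have hp₁ : 0 < p - 1 := by linarith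
  have hα₀ : 0 < 1 / (p - 1) := by positivity
  have hα₁ : 1 / (p - 1) ≤ 1 := by rw [div_le_one hp₁]; linarith
  have hc : 0 < p ^ (-(1 / (p - 1))) := rpow_pos_of_pos (by linarith) _
  rw [gp_eq_smul (by linarith), gp_eq_smul (by linarith), ← smul_sub, norm_smul,
    norm_of_nonneg hc.le]
  calc p ^ (-(1 / (p - 1))) * ‖_‖ ≤ p ^ (-(1 / (p - 1))) * (2 * ‖y - x‖ ^ (1 / (p - 1))) := by
        gcongr
        exact norm_rpow_smul_sub_le hα₀ hα₁ x y
    _ ≤ 3 / p ^ (1 / (p - 1)) * ‖y - x‖ ^ (1 / (p - 1)) := by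
        rw [rpow_neg (by linarith), ← mul_assoc, mul_comm _ 2, ← div_eq_mul_inv]
        gcongr
        norm_num
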